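/- Let G = (V,E) be a simple graph, let uv ∈ E be an edge of G, and let G_F be the gadget extension of G at uv with new vertices a, b, c. If I_F is an independent set of G_F, then I_F contains at most one vertex from {a, b, c}, and I_F \ {a, b, c} is an independent set of G; consequently |I_F| ≤ α(G) + 1. -/
import Mathlib

/-- A set of vertices is independent if no two of its vertices are adjacent. -/
def IsIndepSet {V : Type*} (G : SimpleGraph V) (s : Set V) : Prop :=
  s.Pairwise fun x y => ¬ G.Adj x y

/-- The independence number: the maximum size of an independent set. -/
noncomputable def indepNum {V : Type*} (G : SimpleGraph V) : ℕ :=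
  sSup {n : ℕ | ∃ s : Set V, IsIndepSet G s ∧ s.ncard = n}

/-- The gadget extension of `G` at the edge `uv`: add three new vertices
`a = Sum.inr 0`, `b = Sum.inr 1`, `c = Sum.inr 2` and the six new edges
`ab, bc, ca, au, bu, bv`. -/
def gadget {V : Type*} (G : SimpleGraph V) (u v : V) : SimpleGraph (V ⊕ Fin 3) :=
  SimpleGraph.fromEdgeSet
    ((Sym2.map Sum.inl '' G.edgeSet) ∪
      {s(Sum.inr 0, Sum.inr 1), s(Sum.inr 1, Sum.inr 2), s(Sum.inr 2, Sum.inr 0),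
       s(Sum.inr 0, Sum.inl u), s(Sum.inr 1, Sum.inl u), s(Sum.inr 1, Sum.inl v)})

lemma gadget_adj_inr {V : Type*} (G : SimpleGraph V) (u v : V) (i j : Fin 3) (h : i ≠ j) :
    (gadget G u v).Adj (Sum.inr i) (Sum.inr j) := by
  rw [gadget, SimpleGraph.fromEdgeSet_adj]
  refine ⟨Or.inr ?_, by simp [h]⟩
  fin_cases i <;> fin_cases j <;> simp_all [Sym2.eq_swap]

lemma gadget_adj_inl {V : Type*} (G : SimpleGraph V) (u v : V) {x y : V} (h : G.Adj x y) :
    (gadget G u v).Adj (Sum.inl x) (Sum.inl y) := by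
  rw [gadget, SimpleGraph.fromEdgeSet_adj]
  exact ⟨Or.inl ⟨s(x, y), h, rfl⟩, by simp [h.ne]⟩

theorem clar_stmt_4 {V : Type*} [Fintype V] (G : SimpleGraph V) (u v : V)
    (huv : G.Adj u v) (IF : Set (V ⊕ Fin 3)) (hIF : IsIndepSet (gadget G u v) IF) :
    (IF ∩ {Sum.inr 0, Sum.inr 1, Sum.inr 2}).ncard ≤ 1 ∧
      IsIndepSet G (Sum.inl ⁻¹' IF) ∧
      IF.ncard ≤ indepNum G + 1 := by
  classical
  have h1 : (IF ∩ {Sum.inr 0, Sum.inr 1, Sum.inr 2}).ncard ≤ 1 := by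
    rw [Set.ncard_le_one_iff (Set.toFinite _)]
    rintro a b ⟨haI, ha⟩ ⟨hbI, hb⟩
    obtain ⟨i, rfl⟩ : ∃ i : Fin 3, a = Sum.inr i := by
      rcases ha with rfl | rfl | rfl <;> exact ⟨_, rfl⟩
    obtain ⟨j, rfl⟩ : ∃ j : Fin 3, b = Sum.inr j := by
      rcases hb with rfl | rfl | rfl <;> exact ⟨_, rfl⟩
    by_contra hne
    exact hIF haI hbI hne (gadget_adj_inr G u v i j (by simpa using hne))
  have h2 : IsIndepSet G (Sum.inl ⁻¹' IF) := by
    intro x hx y hy hxy hadj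
    exact hIF hx hy (by simpa using hxy) (gadget_adj_inl G u v hadj)
  refine ⟨h1, h2, ?_⟩
  have hsplit : IF ⊆ (IF ∩ Set.range Sum.inl) ∪ (IF ∩ {Sum.inr 0, Sum.inr 1, Sum.inr 2}) := by
    rintro (x | i) hx
    · exact Or.inl ⟨hx, x, rfl⟩
    · refine Or.inr ⟨hx, ?_⟩; fin_cases i <;> simp
  have hcard : IF.ncard ≤ (IF ∩ Set.range Sum.inl).ncard +
      (IF ∩ {Sum.inr 0, Sum.inr 1, Sum.inr 2}).ncard :=
    le_trans (Set.ncard_le_ncard hsplit (Set.toFinite _)) (Set.ncard_union_le _ _)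
  have hpre : (IF ∩ Set.range Sum.inl).ncard = (Sum.inl ⁻¹' IF).ncard := by
    rw [← Set.image_preimage_eq_inter_range,
      Set.ncard_image_of_injective _ Sum.inl_injective]
  have hle : (Sum.inl ⁻¹' IF).ncard ≤ indepNum G := by
    apply le_csSup
    · refine ⟨Fintype.card V, ?_⟩
      rintro n ⟨s, -, rfl⟩
      simpa [Set.ncard_univ] using Set.ncard_le_ncard (Set.subset_univ s) Set.finite_univ
    · exact ⟨_, h2, rfl⟩
  omega
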